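/- Let k be a field of prime characteristic p, let P be a non-trivial finite abelian p-group, set J = J(kP) and n = dim_k(J/J²). The canonical map Der_1(kP) → End_k(J/J²) ≅ gl_n(k), sending a derivation preserving J to the induced k-linear endomorphism of J/J², is a surjective Lie algebra homomorphism, and its kernel is Der_2(kP), the nilpotent Lie ideal of derivations with image contained in J². -/

import Mathlib

namespace HHPaper

attribute [local instance] LieRing.ofAssociativeRing

open MonoidAlgebra

section Derivations

variable {k A : Type*} [CommRing k] [Ring A] [Algebra k A]

/-- `f` is a derivation on the associative unital `k`-algebra `A`. -/
def IsDerivation (f : Module.End k A) : Prop :=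
  ∀ a b : A, f (a * b) = f a * b + a * f b

lemma IsDerivation.add {f g : Module.End k A} (hf : IsDerivation f) (hg : IsDerivation g) :
    IsDerivation (f + g) := by
  intro a b
  simp only [LinearMap.add_apply, hf a b, hg a b, add_mul, mul_add]
  abel

lemma IsDerivation.zero : IsDerivation (0 : Module.End k A) := by
  intro a b; simp

lemma IsDerivation.smul (c : k) {f : Module.End k A} (hf : IsDerivation f) :
    IsDerivation (c • f) := by
  intro a b
  simp only [LinearMap.smul_apply, hf a b, smul_add, smul_mul_assoc, mul_smul_comm]

lemma IsDerivation.lie {f g : Module.End k A} (hf : IsDerivation f) (hg : IsDerivation g) :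
    IsDerivation ⁅f, g⁆ := by
  intro a b
  simp only [Ring.lie_def, LinearMap.sub_apply, Module.End.mul_apply]
  rw [hg a b, hf a b, map_add, map_add, hf (g a) b, hf a (g b), hg (f a) b, hg a (f b)]
  simp only [sub_mul, mul_sub, add_mul, mul_add]
  abel

variable (k A) in
/-- The Lie algebra of derivations on `A`, as a Lie subalgebra of `Module.End k A`. -/
def derivLie : LieSubalgebra k (Module.End k A) where
  carrier := {f | IsDerivation f}
  add_mem' := fun hf hg => hf.add hg
  zero_mem' := IsDerivation.zero
  smul_mem' := fun c _ hf => hf.smul c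
  lie_mem' := fun hf hg => hf.lie hg

@[simp] lemma mem_derivLie {f : Module.End k A} :
    f ∈ derivLie k A ↔ IsDerivation f := Iff.rfl

variable (k) in
/-- The inner derivation `[c, -]` associated with `c : A`. -/
def innerDeriv (c : A) : Module.End k A :=
  LinearMap.mulLeft k c - LinearMap.mulRight k c

@[simp] lemma innerDeriv_apply (c a : A) : innerDeriv k c a = c * a - a * c := rfl

lemma innerDeriv_isDerivation (c : A) : IsDerivation (innerDeriv k c) := by
  intro a b
  simp only [innerDeriv_apply, sub_mul, mul_sub, mul_assoc]
  abel

lemma innerDeriv_add (c d : A) :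
    innerDeriv k (c + d) = innerDeriv k c + innerDeriv k d := by
  ext a; simp only [innerDeriv_apply, LinearMap.add_apply, add_mul, mul_add]; abel

lemma innerDeriv_smul (s : k) (c : A) :
    innerDeriv k (s • c) = s • innerDeriv k c := by
  ext a
  simp only [innerDeriv_apply, LinearMap.smul_apply, smul_sub, smul_mul_assoc, mul_smul_comm]

lemma innerDeriv_zero : innerDeriv k (0 : A) = 0 := by
  ext a; simp

variable (k A) in
/-- The Lie ideal of inner derivations inside the Lie algebra of derivations. -/
def innerIdeal : LieIdeal k (derivLie k A) where
  carrier := {f | ∃ c : A, (f : Module.End k A) = innerDeriv k c}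
  add_mem' := by
    rintro f g ⟨c, hc⟩ ⟨d, hd⟩
    exact ⟨c + d, by simp [innerDeriv_add, hc, hd]⟩
  zero_mem' := ⟨0, by simp [innerDeriv_zero]⟩
  smul_mem' := by
    rintro s f ⟨c, hc⟩
    exact ⟨s • c, by rw [innerDeriv_smul]; rw [← hc]; rfl⟩
  lie_mem := by
    rintro x m ⟨c, hc⟩
    refine ⟨(x : Module.End k A) c, ?_⟩
    have hx : IsDerivation (x : Module.End k A) := x.2
    ext a
    have hb : ((⁅x, m⁆ : derivLie k A) : Module.End k A) =
        ⁅(x : Module.End k A), (m : Module.End k A)⁆ := rfl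
    rw [hb, hc]
    simp only [Ring.lie_def, LinearMap.sub_apply, Module.End.mul_apply, innerDeriv_apply,
      map_sub, hx c a, hx a c]
    abel

variable (k A) in
/-- First Hochschild cohomology of `A`, as the quotient Lie algebra of derivations
modulo inner derivations. -/
abbrev HH1 := (derivLie k A) ⧸ (innerIdeal k A)

variable (k A) in
/-- The Jacobson radical of `A`, regarded as a `k`-subspace of `A`. -/
def jacRad : Submodule k A :=
  Submodule.restrictScalars k (Ideal.jacobson (⊥ : Ideal A))

variable (k A) in
/-- The Lie subalgebra of derivations with image contained in the `m`-th power of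
the Jacobson radical. -/
def derivRadLie (m : ℕ) : LieSubalgebra k (Module.End k A) where
  carrier := {f | IsDerivation f ∧ LinearMap.range f ≤ (jacRad k A) ^ m}
  add_mem' := by
    rintro f g ⟨hf, hf'⟩ ⟨hg, hg'⟩
    refine ⟨hf.add hg, ?_⟩
    rintro x ⟨a, rfl⟩
    exact add_mem (hf' ⟨a, rfl⟩) (hg' ⟨a, rfl⟩)
  zero_mem' := ⟨IsDerivation.zero, by rintro x ⟨a, rfl⟩; simp⟩
  smul_mem' := by
    rintro s f ⟨hf, hf'⟩
    refine ⟨hf.smul s, ?_⟩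
    rintro x ⟨a, rfl⟩
    exact Submodule.smul_mem _ s (hf' ⟨a, rfl⟩)
  lie_mem' := by
    rintro f g ⟨hf, hf'⟩ ⟨hg, hg'⟩
    refine ⟨hf.lie hg, ?_⟩
    rintro x ⟨a, rfl⟩
    have : ⁅f, g⁆ a = f (g a) - g (f a) := by
      simp [Ring.lie_def, Module.End.mul_apply]
    rw [this]
    exact sub_mem (hf' ⟨g a, rfl⟩) (hg' ⟨f a, rfl⟩)

@[simp] lemma mem_derivRadLie {m : ℕ} {f : Module.End k A} :
    f ∈ derivRadLie k A m ↔ IsDerivation f ∧ LinearMap.range f ≤ (jacRad k A) ^ m := Iff.rfl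

variable (k A) in
/-- The Loewy length of `A`: the least positive `n` with `J(A)^n = 0`. -/
noncomputable def loewyLength : ℕ :=
  sInf {n : ℕ | 0 < n ∧ (jacRad k A) ^ n = ⊥}

/-- A semisimple-style multiplicity freeness: any two isomorphic simple submodules
coincide. -/
def IsMultiplicityFree (R M : Type*) [Ring R] [AddCommGroup M] [Module R M] : Prop :=
  ∀ S T : Submodule R M, IsSimpleModule R S → IsSimpleModule R T →
    Nonempty (S ≃ₗ[R] T) → S = T

end Derivations


section GroupAlgebra

open MonoidAlgebra

variable (k : Type*) [CommRing k] {P E : Type*} [Group P] [Group E]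

/-- The subgroup `[P,E]` generated by the elements `(ᵉu)u⁻¹`. -/
def commSubgroupE (φ : E →* MulAut P) : Subgroup P :=
  Subgroup.closure {x : P | ∃ (e : E) (u : P), x = φ e u * u⁻¹}

/-- A linear endomorphism of `kP` is `E`-stable if it commutes with the `E`-action. -/
def IsEStable (φ : E →* MulAut P) (f : Module.End k (MonoidAlgebra k P)) : Prop :=
  ∀ (e : E) (a : MonoidAlgebra k P),
    f (MonoidAlgebra.domCongr k k (φ e) a) = MonoidAlgebra.domCongr k k (φ e) (f a)

/-- The Lie algebra `Der(kP)^E` of `E`-stable derivations on the group algebra `kP`. -/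
def eStableDerivLie (φ : E →* MulAut P) :
    LieSubalgebra k (Module.End k (MonoidAlgebra k P)) where
  carrier := {f | IsDerivation f ∧ IsEStable k φ f}
  add_mem' := by
    rintro f g ⟨hf, hf'⟩ ⟨hg, hg'⟩
    exact ⟨hf.add hg, fun e a => by simp [LinearMap.add_apply, hf' e a, hg' e a]⟩
  zero_mem' := ⟨IsDerivation.zero, fun e a => by simp⟩
  smul_mem' := by
    rintro s f ⟨hf, hf'⟩
    refine ⟨hf.smul s, fun e a => ?_⟩
    simp only [LinearMap.smul_apply, hf' e a, map_smul]
  lie_mem' := by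
    rintro f g ⟨hf, hf'⟩ ⟨hg, hg'⟩
    refine ⟨hf.lie hg, fun e a => ?_⟩
    simp only [Ring.lie_def, LinearMap.sub_apply, Module.End.mul_apply, hf' e, hg' e, map_sub]

@[simp] lemma mem_eStableDerivLie {φ : E →* MulAut P} {f : Module.End k (MonoidAlgebra k P)} :
    f ∈ eStableDerivLie k φ ↔ IsDerivation f ∧ IsEStable k φ f := Iff.rfl

end GroupAlgebra

section Commutant

variable (k : Type*) [CommRing k] {Q : Type*} [AddCommGroup Q] [Module k Q]
  {E : Type*} [Group E]

/-- The Lie subalgebra of `Module.End k Q` of endomorphisms commuting with a given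
`E`-action, i.e. `End_{kE}(Q)`. -/
def commutantLie (ρ : E →* (Q ≃ₗ[k] Q)) : LieSubalgebra k (Module.End k Q) where
  carrier := {g | ∀ (e : E) (x : Q), g (ρ e x) = ρ e (g x)}
  add_mem' := by
    intro f g hf hg e x
    simp [LinearMap.add_apply, hf e x, hg e x]
  zero_mem' := by intro e x; simp
  smul_mem' := by
    intro s f hf e x
    simp [LinearMap.smul_apply, hf e x]
  lie_mem' := by
    intro f g hf hg e x
    simp only [Ring.lie_def, LinearMap.sub_apply, Module.End.mul_apply, hf e, hg e, map_sub]

end Commutant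

variable (k A : Type*) [CommRing k] [Ring A] [Algebra k A] in
/-- The quotient `J(A)/J(A)²` as a `k`-module. -/
abbrev radQuot : Type _ :=
  ↥(jacRad k A) ⧸ ((jacRad k A ^ 2).comap (jacRad k A).subtype)


/-!
A derivation with image in `J^(m+1)` raises the `J`-adic filtration by `m` (Leibniz rule). Hence
`Der_1` preserves `J` and `J²`, which gives the Lie homomorphism `Der_1(A) → End(J/J²)`; moreover
`[Der_(m+1), Der_(n+1)] ⊆ Der_(m+n+1)`, and every element of `Der_2` is a nilpotent endomorphism
since `J` is nilpotent, so `Der_2` is a nilpotent Lie algebra by Engel's theorem. When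
`A = k·1 + J`, as for `kP` via the augmentation, a derivation (which kills `1`) inducing `0` on
`J/J²` has image in `J²`.

For surjectivity: `J(kP)` is spanned by the elements `g - 1` (nilpotent since `P` is a `p`-group),
and `gh - 1 ≡ (g - 1) + (h - 1) mod J²`. So for `φ ∈ End(J/J²)`, lifting `g ↦ φ[g - 1]` linearly
to `J` gives a homomorphism `δ : P → J`, and the derivation with `D g = g δ(g)` induces `φ`.
-/

section Filtration

variable {k A : Type*} [CommRing k] [Ring A] [Algebra k A] {f g : Module.End k A}

lemma IsDerivation.map_one (hf : IsDerivation f) : f 1 = 0 := by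
  simpa using hf 1 1

lemma IsDerivation.map_algebraMap (hf : IsDerivation f) (c : k) : f (algebraMap k A c) = 0 := by
  rw [Algebra.algebraMap_eq_smul_one, map_smul, hf.map_one, smul_zero]

lemma IsDerivation.apply_mem_pow (hf : IsDerivation f) {I : Submodule k A} {a : ℕ}
    (hfa : ∀ x, f x ∈ I ^ (a + 1)) : ∀ {b : ℕ} {x : A}, x ∈ I ^ b → f x ∈ I ^ (a + b)
  | 0, x, hx => by
    obtain ⟨c, rfl⟩ := Submodule.mem_one.1 hx
    rw [hf.map_algebraMap]
    exact zero_mem _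
  | b + 1, x, hx => by
    rw [pow_succ] at hx
    induction hx using Submodule.mul_induction_on' with
    | mem_mul_mem m hm n hn =>
      rw [hf m n]
      refine add_mem ?_ ?_
      · rw [← add_assoc, pow_succ]
        exact Submodule.mul_mem_mul (hf.apply_mem_pow hfa hm) hn
      · rw [show a + (b + 1) = b + (a + 1) by omega, pow_add]
        exact Submodule.mul_mem_mul hm (hfa n)
    | add x _ y _ hx hy => rw [map_add]; exact add_mem hx hy

lemma apply_mem_jacRad_pow_of_mem_derivRadLie {m b : ℕ} (hf : f ∈ derivRadLie k A (m + 1))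
    {x : A} (hx : x ∈ jacRad k A ^ b) : f x ∈ jacRad k A ^ (m + b) :=
  hf.1.apply_mem_pow (fun y => hf.2 (LinearMap.mem_range_self f y)) hx

lemma lie_mem_derivRadLie {m n : ℕ} (hf : f ∈ derivRadLie k A (m + 1))
    (hg : g ∈ derivRadLie k A (n + 1)) : ⁅f, g⁆ ∈ derivRadLie k A (m + n + 1) := by
  refine ⟨hf.1.lie hg.1, ?_⟩
  rintro _ ⟨x, rfl⟩
  rw [Ring.lie_def, LinearMap.sub_apply, Module.End.mul_apply, Module.End.mul_apply]
  refine sub_mem ?_ ?_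
  · rw [add_assoc]
    exact apply_mem_jacRad_pow_of_mem_derivRadLie hf (hg.2 (LinearMap.mem_range_self g x))
  · rw [show m + n + 1 = n + (m + 1) by omega]
    exact apply_mem_jacRad_pow_of_mem_derivRadLie hg (hf.2 (LinearMap.mem_range_self f x))

lemma isNilpotent_of_mem_derivRadLie_two {N : ℕ} (hN : jacRad k A ^ N = ⊥)
    (hf : f ∈ derivRadLie k A 2) : IsNilpotent f := by
  have hpow : ∀ n x, (f ^ (n + 1)) x ∈ jacRad k A ^ (n + 2) := by
    intro n
    induction n with
    | zero => exact fun x => hf.2 (LinearMap.mem_range_self f x)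
    | succ n ih =>
      intro x
      rw [pow_succ' f, Module.End.mul_apply, show n + 1 + 2 = 1 + (n + 2) by omega]
      exact apply_mem_jacRad_pow_of_mem_derivRadLie hf (ih x)
  refine ⟨N + 1, LinearMap.ext fun x => ?_⟩
  simpa [pow_add, hN] using hpow N x

end Filtration

section FiniteDimensional

variable {k A : Type*} [Field k] [CommRing A] [Algebra k A]

lemma exists_jacRad_pow_eq_bot [IsArtinianRing A] : ∃ N, jacRad k A ^ N = ⊥ := by
  obtain ⟨N, hN⟩ := IsArtinianRing.isNilpotent_jacobson_bot (R := A)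
  refine ⟨N + 1, ?_⟩
  rw [jacRad, ← Submodule.restrictScalars_pow N.add_one_ne_zero, pow_succ, hN, zero_mul]
  rfl

theorem isNilpotent_derivRadLie_two [Module.Finite k A] :
    LieRing.IsNilpotent (derivRadLie k A 2) := by
  have := IsArtinianRing.of_finite k A
  obtain ⟨N, hN⟩ := exists_jacRad_pow_eq_bot (k := k) (A := A)
  rw [LieAlgebra.isNilpotent_iff_forall (R := k)]
  exact fun f =>
    LieAlgebra.isNilpotent_ad_of_isNilpotent (isNilpotent_of_mem_derivRadLie_two hN f.2)

end FiniteDimensional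

section RadQuot

variable {k A : Type*} [CommRing k] [Ring A] [Algebra k A]

lemma radQuot_mk_eq_mk_iff {x y : jacRad k A} :
    (Submodule.Quotient.mk x : radQuot k A) = Submodule.Quotient.mk y ↔
      (x : A) - y ∈ jacRad k A ^ 2 :=
  Submodule.Quotient.eq _

lemma radQuot_mk_eq_zero_iff {x : jacRad k A} :
    (Submodule.Quotient.mk x : radQuot k A) = 0 ↔ (x : A) ∈ jacRad k A ^ 2 :=
  Submodule.Quotient.mk_eq_zero _

lemma apply_mem_jacRad_of_mem_derivRadLie_one {f : Module.End k A}
    (hf : f ∈ derivRadLie k A 1) (x : A) : f x ∈ jacRad k A := by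
  simpa using hf.2 (LinearMap.mem_range_self f x)

variable (k A) in
noncomputable def toEndRadQuot : derivRadLie k A 1 →ₗ⁅k⁆ Module.End k (radQuot k A) where
  toFun f := Submodule.mapQ _ _
    ((f : Module.End k A).restrict fun x _ => apply_mem_jacRad_of_mem_derivRadLie_one f.2 x)
    fun _ hx => by simpa using apply_mem_jacRad_pow_of_mem_derivRadLie (b := 2) f.2 hx
  map_add' _ _ := Submodule.linearMap_qext _ rfl
  map_smul' _ _ := Submodule.linearMap_qext _ rfl
  map_lie' := Submodule.linearMap_qext _ rfl

lemma toEndRadQuot_mk (f : derivRadLie k A 1) (x : jacRad k A) :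
    toEndRadQuot k A f (Submodule.Quotient.mk x) =
      Submodule.Quotient.mk
        ⟨(f : Module.End k A) x, apply_mem_jacRad_of_mem_derivRadLie_one f.2 x⟩ :=
  rfl

lemma toEndRadQuot_eq_zero_iff (hA : ∀ a : A, ∃ c : k, a - algebraMap k A c ∈ jacRad k A)
    (f : derivRadLie k A 1) :
    toEndRadQuot k A f = 0 ↔ LinearMap.range (f : Module.End k A) ≤ jacRad k A ^ 2 := by
  constructor
  · rintro hf _ ⟨a, rfl⟩
    obtain ⟨c, hc⟩ := hA a
    have := LinearMap.congr_fun hf (Submodule.Quotient.mk ⟨_, hc⟩)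
    rw [toEndRadQuot_mk, LinearMap.zero_apply, radQuot_mk_eq_zero_iff] at this
    simpa [f.2.1.map_algebraMap] using this
  · refine fun hf => Submodule.linearMap_qext _ (LinearMap.ext fun x => ?_)
    exact radQuot_mk_eq_zero_iff.2 (hf (LinearMap.mem_range_self _ _))

end RadQuot

section GroupAlgebra

open MonoidAlgebra Submodule

section LogDeriv

variable {k P : Type*} [CommRing k] [CommMonoid P]

variable (k) in
noncomputable def derivOfLogDeriv (δ : P → MonoidAlgebra k P) :
    Module.End k (MonoidAlgebra k P) :=
  (MonoidAlgebra.basis P k).constr k fun g => of k P g * δ g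

lemma derivOfLogDeriv_of (δ : P → MonoidAlgebra k P) (g : P) :
    derivOfLogDeriv k δ (of k P g) = of k P g * δ g :=
  (MonoidAlgebra.basis P k).constr_basis k _ g

lemma isDerivation_derivOfLogDeriv {δ : P → MonoidAlgebra k P}
    (hδ : ∀ g h, δ (g * h) = δ g + δ h) : IsDerivation (derivOfLogDeriv k δ) := by
  set D := derivOfLogDeriv k δ
  have : (LinearMap.mul k _).compr₂ D =
      (LinearMap.mul k _).comp D + (LinearMap.mul k _).compl₂ D := by
    refine LinearMap.ext_basis (MonoidAlgebra.basis P k) (MonoidAlgebra.basis P k) fun g h => ?_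
    simp only [MonoidAlgebra.basis_apply, ← of_apply, LinearMap.compr₂_apply,
      LinearMap.add_apply, LinearMap.comp_apply, LinearMap.compl₂_apply, LinearMap.mul_apply']
    rw [← map_mul, derivOfLogDeriv_of, derivOfLogDeriv_of, derivOfLogDeriv_of, hδ, map_mul]
    ring
  exact fun a b => LinearMap.congr_fun₂ this a b

lemma range_derivOfLogDeriv_le {δ : P → MonoidAlgebra k P} {I : Ideal (MonoidAlgebra k P)}
    (hδ : ∀ g, δ g ∈ I) : LinearMap.range (derivOfLogDeriv k δ) ≤ I.restrictScalars k := by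
  rw [derivOfLogDeriv, Module.Basis.constr_range, span_le]
  rintro _ ⟨g, rfl⟩
  exact I.mul_mem_left _ (hδ g)

end LogDeriv

section Augmentation

variable {k P : Type*} [Field k] [Monoid P]

variable (k P) in
noncomputable def augmentation : MonoidAlgebra k P →ₐ[k] k := MonoidAlgebra.lift k k P 1

lemma sub_augmentation_mem_span (x : MonoidAlgebra k P) :
    x - algebraMap k _ (augmentation k P x) ∈ span k (Set.range fun g => of k P g - 1) := by
  induction x using MonoidAlgebra.induction_on with
  | of g =>
    rw [show augmentation k P (of k P g) = 1 by simp [augmentation], map_one]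
    exact subset_span ⟨g, rfl⟩
  | add x y hx hy =>
    convert add_mem hx hy using 1
    simp only [map_add]; abel
  | smul c x hx =>
    convert smul_mem _ c hx using 1
    rw [map_smul, smul_sub, Algebra.algebraMap_eq_smul_one, Algebra.algebraMap_eq_smul_one,
      smul_smul, smul_eq_mul]

lemma jacRad_le_span_of_sub_one :
    jacRad k (MonoidAlgebra k P) ≤ span k (Set.range fun g => of k P g - 1) := by
  intro x hx
  have hmax : (RingHom.ker (augmentation k P)).IsMaximal :=
    RingHom.ker_isMaximal_of_surjective _ fun c => ⟨algebraMap k _ c, AlgHom.commutes _ c⟩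
  have hx0 : augmentation k P x = 0 :=
    (sInf_le ⟨bot_le, hmax⟩ : (⊥ : Ideal (MonoidAlgebra k P)).jacobson ≤ _) hx
  simpa [hx0] using sub_augmentation_mem_span x

end Augmentation

section PGroup

variable {k P : Type*} [Field k] {p : ℕ} [Fact p.Prime] [CharP k p] [CommGroup P]

lemma of_sub_one_mem_jacRad (hP : IsPGroup p P) (g : P) :
    of k P g - 1 ∈ jacRad k (MonoidAlgebra k P) := by
  have := charP_of_injective_algebraMap (algebraMap k (MonoidAlgebra k P)).injective p
  obtain ⟨n, hn⟩ := hP g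
  have hnil : IsNilpotent (of k P g - 1) :=
    ⟨p ^ n, by rw [sub_pow_char_pow, ← map_pow, hn, map_one, one_pow, sub_self]⟩
  exact Ideal.mem_jacobson_bot.2 fun y =>
    ((Commute.all _ y).isNilpotent_mul_right hnil).isUnit_add_one

lemma jacRad_eq_span_of_sub_one (hP : IsPGroup p P) :
    jacRad k (MonoidAlgebra k P) = span k (Set.range fun g => of k P g - 1) :=
  jacRad_le_span_of_sub_one.antisymm
    (span_le.2 (Set.range_subset_iff.2 (of_sub_one_mem_jacRad hP)))

lemma exists_sub_algebraMap_mem_jacRad (hP : IsPGroup p P) (x : MonoidAlgebra k P) :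
    ∃ c : k, x - algebraMap k _ c ∈ jacRad k (MonoidAlgebra k P) :=
  ⟨augmentation k P x, (jacRad_eq_span_of_sub_one hP).ge (sub_augmentation_mem_span x)⟩

lemma span_range_of_sub_one_eq_top (hP : IsPGroup p P) :
    span k (Set.range fun g => (⟨of k P g - 1, of_sub_one_mem_jacRad hP g⟩ :
      jacRad k (MonoidAlgebra k P))) = ⊤ := by
  apply map_injective_of_injective (jacRad k _).injective_subtype
  rw [map_span, ← Set.range_comp, Submodule.map_top, range_subtype]
  exact (jacRad_eq_span_of_sub_one hP).symm

theorem toEndRadQuot_surjective (hP : IsPGroup p P) :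
    Function.Surjective (toEndRadQuot k (MonoidAlgebra k P)) := by
  intro φ
  set J := jacRad k (MonoidAlgebra k P)
  set π := ((J ^ 2).comap J.subtype).mkQ
  let u : P → J := fun g => ⟨of k P g - 1, of_sub_one_mem_jacRad hP g⟩
  obtain ⟨σ, hσ⟩ := π.exists_rightInverse_of_surjective (range_mkQ _)
  have hπσ : ∀ q, π (σ q) = q := LinearMap.congr_fun hσ
  have hπu : ∀ g h, π (u (g * h)) = π (u g) + π (u h) := by
    intro g h
    rw [← map_add, mkQ_apply, mkQ_apply, radQuot_mk_eq_mk_iff]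
    refine (sq J).ge ?_
    convert mul_mem_mul (u g).2 (u h).2 using 1
    simp only [u, map_mul, AddMemClass.coe_add]
    ring
  let δ : P → MonoidAlgebra k P := fun g => σ (φ (π (u g)))
  have hδ : ∀ g h, δ (g * h) = δ g + δ h := fun g h => by
    simp only [δ, hπu, map_add, Submodule.coe_add]
  have hδJ : ∀ g, δ g ∈ J := fun g => (σ _).2
  let D : derivRadLie k (MonoidAlgebra k P) 1 :=
    ⟨derivOfLogDeriv k δ, isDerivation_derivOfLogDeriv hδ,
      by rw [pow_one]; exact range_derivOfLogDeriv_le hδJ⟩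
  refine ⟨D, linearMap_qext _ <|
    LinearMap.ext_on_range (span_range_of_sub_one_eq_top hP) fun g => ?_⟩
  change toEndRadQuot k _ D (π (u g)) = φ (π (u g))
  rw [← hπσ (φ (π (u g))), mkQ_apply, mkQ_apply, toEndRadQuot_mk, radQuot_mk_eq_mk_iff]
  refine (sq J).ge ?_
  -- `D (g - 1) = g δ g = δ g + (g - 1) δ g`
  convert mul_mem_mul (u g).2 (hδJ g) using 1
  change derivOfLogDeriv k δ (of k P g - 1) - δ g = (of k P g - 1) * δ g
  rw [map_sub, derivOfLogDeriv_of, (isDerivation_derivOfLogDeriv hδ).map_one]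
  ring

end PGroup

end GroupAlgebra

theorem stmt10_general (k : Type*) [Field k] (p : ℕ) [Fact p.Prime] [CharP k p]
    (P : Type*) [CommGroup P] [Fintype P] (hP : IsPGroup p P) :
    ∃ Θ : derivRadLie k (MonoidAlgebra k P) 1 →ₗ⁅k⁆ Module.End k (radQuot k (MonoidAlgebra k P)),
      Function.Surjective Θ ∧
      -- `Θ` is the canonical map, sending a derivation preserving `J` to the induced
      -- endomorphism of `J/J²`
      (∀ (f : derivRadLie k (MonoidAlgebra k P) 1) (x : MonoidAlgebra k P)
          (hx : x ∈ jacRad k (MonoidAlgebra k P))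
          (hfx : (f : Module.End k (MonoidAlgebra k P)) x ∈ jacRad k (MonoidAlgebra k P)),
        Θ f (Submodule.Quotient.mk ⟨x, hx⟩) =
          Submodule.Quotient.mk ⟨(f : Module.End k (MonoidAlgebra k P)) x, hfx⟩) ∧
      -- the kernel of `Θ` is `Der_2(kP)`
      (∀ f : derivRadLie k (MonoidAlgebra k P) 1,
        Θ f = 0 ↔ LinearMap.range (f : Module.End k (MonoidAlgebra k P)) ≤
          jacRad k (MonoidAlgebra k P) ^ 2) ∧
      -- `Der_2(kP)` is a nilpotent Lie ideal in `Der_1(kP)`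
      LieRing.IsNilpotent (derivRadLie k (MonoidAlgebra k P) 2) ∧
      (∀ f g : Module.End k (MonoidAlgebra k P),
        f ∈ derivRadLie k (MonoidAlgebra k P) 1 → g ∈ derivRadLie k (MonoidAlgebra k P) 2 →
          ⁅f, g⁆ ∈ derivRadLie k (MonoidAlgebra k P) 2) ∧
      -- `End_k(J/J²) ≅ gl_n(k)` for `n = dim_k (J/J²)`
      Nonempty (Module.End k (radQuot k (MonoidAlgebra k P)) ≃ₗ⁅k⁆
        Matrix (Fin (Module.finrank k (radQuot k (MonoidAlgebra k P))))
          (Fin (Module.finrank k (radQuot k (MonoidAlgebra k P)))) k) :=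
  ⟨toEndRadQuot k _, toEndRadQuot_surjective hP, fun _ _ _ _ => rfl,
    toEndRadQuot_eq_zero_iff (exists_sub_algebraMap_mem_jacRad hP), isNilpotent_derivRadLie_two,
    fun _ _ hf hg => lie_mem_derivRadLie (m := 0) (n := 1) hf hg,
    ⟨(algEquivMatrix (Module.finBasis k _)).toLieEquiv⟩⟩

/-- For a non-trivial finite abelian `p`-group `P`, the canonical map
`Der_1(kP) → End_k(J/J²) ≅ gl_n(k)` (where `n = dim_k J/J²`) is a surjective Lie algebra
homomorphism whose kernel is `Der_2(kP)`, the nilpotent Lie ideal of derivations with image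
contained in `J²`. -/
theorem stmt10 (k : Type*) [Field k] (p : ℕ) [Fact p.Prime] [CharP k p]
    (P : Type*) [CommGroup P] [Fintype P] [Nontrivial P] (hP : IsPGroup p P) :
    ∃ Θ : derivRadLie k (MonoidAlgebra k P) 1 →ₗ⁅k⁆ Module.End k (radQuot k (MonoidAlgebra k P)),
      Function.Surjective Θ ∧
      -- `Θ` is the canonical map, sending a derivation preserving `J` to the induced
      -- endomorphism of `J/J²`
      (∀ (f : derivRadLie k (MonoidAlgebra k P) 1) (x : MonoidAlgebra k P)
          (hx : x ∈ jacRad k (MonoidAlgebra k P))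
          (hfx : (f : Module.End k (MonoidAlgebra k P)) x ∈ jacRad k (MonoidAlgebra k P)),
        Θ f (Submodule.Quotient.mk ⟨x, hx⟩) =
          Submodule.Quotient.mk ⟨(f : Module.End k (MonoidAlgebra k P)) x, hfx⟩) ∧
      -- the kernel of `Θ` is `Der_2(kP)`
      (∀ f : derivRadLie k (MonoidAlgebra k P) 1,
        Θ f = 0 ↔ LinearMap.range (f : Module.End k (MonoidAlgebra k P)) ≤
          jacRad k (MonoidAlgebra k P) ^ 2) ∧
      -- `Der_2(kP)` is a nilpotent Lie ideal in `Der_1(kP)`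
      LieRing.IsNilpotent (derivRadLie k (MonoidAlgebra k P) 2) ∧
      (∀ f g : Module.End k (MonoidAlgebra k P),
        f ∈ derivRadLie k (MonoidAlgebra k P) 1 → g ∈ derivRadLie k (MonoidAlgebra k P) 2 →
          ⁅f, g⁆ ∈ derivRadLie k (MonoidAlgebra k P) 2) ∧
      -- `End_k(J/J²) ≅ gl_n(k)` for `n = dim_k (J/J²)`
      Nonempty (Module.End k (radQuot k (MonoidAlgebra k P)) ≃ₗ⁅k⁆
        Matrix (Fin (Module.finrank k (radQuot k (MonoidAlgebra k P))))
          (Fin (Module.finrank k (radQuot k (MonoidAlgebra k P)))) k) :=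
  stmt10_general k p P hP

end HHPaper
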